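/- Consider the ManiDSDP iteration: for k ≥ 1 let p_k be a positive integer, Y^k ∈ ℝ^{n×p_k} with every row of unit Euclidean norm, S^k = Y^k·(Y^k)ᵀ, y^k = (𝒜𝒜*)^{-1}𝒜(S^k + C), R^k = 𝒜*(y^k) − S^k − C, X̃^{k+1} = X̃^k − σ_k·R^{k+1} with 𝒜(X̃^k) = 0 for all k ≥ 1 and σ_k ∈ [σ_min, σ_max] for constants 0 < σ_min ≤ σ_max, z^k = diag((X̃^k + D)·S^k), and X^k = X̃^k + D − Diag(z^k). Suppose the stopping criterion ‖X^{k+1}·Y^{k+1}‖ ≤ ε_k and λ_min(X^{k+1}) ≥ −τ_k holds for all k, where (ε_k), (τ_k) are nonnegative with Σ_k ε_k < ∞ and Σ_k τ_k < ∞, and suppose there exists a KKT point (S*, y*, X*, z*) of (DSDP') (S* = 𝒜*(y*) − C, diag(S*) = 1, S*, X* positive semidefinite, ⟨X*, S*⟩ = 0, 𝒜(X* + Diag(z*)) = b). If (Ŝ, ŷ, X̂, ẑ) is a limit point of the sequence (S^k, y^k, X^k, z^k)_{k≥1} (i.e., the limit along some strictly increasing subsequence of indices), then (Ŝ, ŷ,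 X̂, ẑ) is a KKT point of (DSDP): Ŝ = 𝒜*(ŷ) − C, every diagonal entry of Ŝ equals 1, Ŝ and X̂ are positive semidefinite, ⟨X̂, Ŝ⟩ = 0, and 𝒜(X̂ + Diag(ẑ)) = b. -/

import Mathlib

open Matrix BigOperators Filter

/-- Frobenius inner product `⟨A, B⟩ = Tr(AᵀB)`. -/
noncomputable def fip {k l : Type*} [Fintype k] [Fintype l] (A B : Matrix k l ℝ) : ℝ :=
  (Aᵀ * B).trace

/-- Frobenius norm `‖A‖ = √Tr(AᵀA)`. -/
noncomputable def frobNorm {k l : Type*} [Fintype k] [Fintype l] (A : Matrix k l ℝ) : ℝ :=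
  Real.sqrt (fip A A)

/-- The linear operator `𝒜 : S_n → ℝ^m`, `𝒜(X) = (⟨A_i, X⟩)_i`. -/
noncomputable def opA {n m : ℕ} (A : Fin m → Matrix (Fin n) (Fin n) ℝ)
    (X : Matrix (Fin n) (Fin n) ℝ) : Fin m → ℝ :=
  fun i => fip (A i) X

/-- The adjoint operator `𝒜* : ℝ^m → S_n`, `𝒜*(y) = Σ_i y_i A_i`. -/
noncomputable def adjA {n m : ℕ} (A : Fin m → Matrix (Fin n) (Fin n) ℝ)
    (y : Fin m → ℝ) : Matrix (Fin n) (Fin n) ℝ :=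
  ∑ i, y i • A i

/-- The inverse `(𝒜𝒜*)⁻¹` of the operator `𝒜𝒜* : ℝ^m → ℝ^m`. -/
noncomputable def AAinv {n m : ℕ} (A : Fin m → Matrix (Fin n) (Fin n) ℝ) :
    (Fin m → ℝ) → (Fin m → ℝ) :=
  Function.invFun (fun y => opA A (adjA A y))

variable {k l : Type*} [Fintype k] [Fintype l]

lemma fip_eq_sum (A B : Matrix k l ℝ) : fip A B = ∑ j, ∑ i, A i j * B i j := by
  simp [fip, Matrix.trace, Matrix.mul_apply, Matrix.diag]

lemma fip_comm (A B : Matrix k l ℝ) : fip A B = fip B A := by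
  simp [fip_eq_sum, mul_comm]

lemma fip_add_left (A B C : Matrix k l ℝ) : fip (A + B) C = fip A C + fip B C := by
  simp [fip_eq_sum, add_mul, Finset.sum_add_distrib]

lemma fip_sub_left (A B C : Matrix k l ℝ) : fip (A - B) C = fip A C - fip B C := by
  simp [fip_eq_sum, sub_mul, Finset.sum_sub_distrib]

lemma fip_add_right (A B C : Matrix k l ℝ) : fip A (B + C) = fip A B + fip A C := by
  simp [fip_eq_sum, mul_add, Finset.sum_add_distrib]

lemma fip_sub_right (A B C : Matrix k l ℝ) : fip A (B - C) = fip A B - fip A C := by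
  simp [fip_eq_sum, mul_sub, Finset.sum_sub_distrib]

lemma fip_smul_left (c : ℝ) (A B : Matrix k l ℝ) : fip (c • A) B = c * fip A B := by
  simp [fip_eq_sum, Finset.mul_sum, mul_assoc]

lemma fip_smul_right (c : ℝ) (A B : Matrix k l ℝ) : fip A (c • B) = c * fip A B := by
  simp [fip_eq_sum, Finset.mul_sum]; ring_nf
  exact Finset.sum_congr rfl fun j _ => Finset.sum_congr rfl fun i _ => by ring

lemma fip_self_nonneg (A : Matrix k l ℝ) : 0 ≤ fip A A := by
  rw [fip_eq_sum]
  exact Finset.sum_nonneg fun j _ => Finset.sum_nonneg fun i _ => mul_self_nonneg _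

lemma fip_self_eq_zero {A : Matrix k l ℝ} (h : fip A A = 0) : A = 0 := by
  ext i j
  rw [fip_eq_sum] at h
  have h1 : ∀ jj ∈ (Finset.univ : Finset l), (0:ℝ) ≤ ∑ ii, A ii jj * A ii jj :=
    fun jj _ => Finset.sum_nonneg fun ii _ => mul_self_nonneg _
  have h2 := (Finset.sum_eq_zero_iff_of_nonneg h1).mp h j (Finset.mem_univ _)
  have h3 := (Finset.sum_eq_zero_iff_of_nonneg
    (fun ii _ => mul_self_nonneg (A ii j))).mp h2 i (Finset.mem_univ _)
  simpa [mul_self_eq_zero] using h3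

lemma fip_cauchy (A B : Matrix k l ℝ) : (fip A B)^2 ≤ fip A A * fip B B := by
  simp only [fip_eq_sum, ← Finset.sum_product']
  have := Finset.sum_mul_sq_le_sq_mul_sq (Finset.univ ×ˢ Finset.univ)
    (fun x : l × k => A x.2 x.1) (fun x : l × k => B x.2 x.1)
  simpa [sq] using this

variable {p : Type*} [Fintype p]

lemma fip_mul_right (X : Matrix k k ℝ) (Y : Matrix k p ℝ) :
    fip X (Y * Yᵀ) = fip (X * Y) Y := by
  simp only [fip, Matrix.transpose_mul]
  rw [← Matrix.mul_assoc, Matrix.trace_mul_comm (Xᵀ * Y) Yᵀ, ← Matrix.mul_assoc]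

lemma fip_diagonal_right [DecidableEq k] (M : Matrix k k ℝ) (w : k → ℝ) :
    fip M (Matrix.diagonal w) = ∑ i, M i i * w i := by
  simp [fip_eq_sum, Matrix.diagonal_apply, Finset.sum_ite_eq, mul_comm]

lemma fip_one_right [DecidableEq k] (M : Matrix k k ℝ) :
    fip M 1 = ∑ i, M i i := by
  rw [← Matrix.diagonal_one, fip_diagonal_right]; simp

lemma quadform_eq_fip (M : Matrix k k ℝ) (x : k → ℝ) :
    star x ⬝ᵥ M *ᵥ x = fip (Matrix.vecMulVec x x) M := by
  simp only [fip_eq_sum, Matrix.vecMulVec_apply, dotProduct, Matrix.mulVec, Pi.star_apply,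
    star_trivial, Finset.mul_sum]
  rw [Finset.sum_comm]
  exact Finset.sum_congr rfl fun j _ => Finset.sum_congr rfl fun i _ => by ring

lemma isHermitian_transpose_eq {A : Matrix k k ℝ} (h : A.IsHermitian) : Aᵀ = A := by
  ext i j
  simpa using congrFun (congrFun h.eq i) j

lemma trace_nonneg_of_posSemidef {M : Matrix k k ℝ} (hM : M.PosSemidef) : 0 ≤ M.trace := by
  classical
  rw [Matrix.trace]
  refine Finset.sum_nonneg fun i _ => ?_
  have := hM.dotProduct_mulVec_nonneg (Pi.single i 1)
  simpa [dotProduct, Matrix.mulVec, Pi.single_apply] using this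

lemma fip_nonneg {A B : Matrix k k ℝ} (hA : A.PosSemidef) (hB : B.PosSemidef) :
    0 ≤ fip A B := by
  classical
  obtain ⟨Q, hQmul, hQherm⟩ : ∃ Q : Matrix k k ℝ, Q * Q = A ∧ Q.IsHermitian :=
    by open scoped MatrixOrder in
      exact ⟨CFC.sqrt A, CFC.sqrt_mul_sqrt_self A hA.nonneg, (CFC.sqrt_nonneg A).posSemidef.1⟩
  subst hQmul
  have h1 : fip (Q * Q) B = (Q * B * Q).trace := by
    rw [fip, Matrix.transpose_mul, isHermitian_transpose_eq hQherm, Matrix.mul_assoc,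
      Matrix.trace_mul_comm]
  rw [h1]
  have hP : (Q * B * Q).PosSemidef := by
    have := hB.conjTranspose_mul_mul_same Q
    rwa [hQherm.eq] at this
  exact trace_nonneg_of_posSemidef hP

lemma posSemidef_add_smul_one [DecidableEq k] {M : Matrix k k ℝ} (hM : M.IsHermitian) (c : ℝ)
    (h : ∀ i, -c ≤ hM.eigenvalues i) : (M + c • 1).PosSemidef := by
  set U : Matrix k k ℝ := (hM.eigenvectorUnitary : Matrix k k ℝ) with hUdef
  have hU : U * star U = 1 := (Matrix.mem_unitaryGroup_iff).mp hM.eigenvectorUnitary.2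
  have hdiag : Matrix.diagonal (RCLike.ofReal ∘ hM.eigenvalues) + c • (1 : Matrix k k ℝ)
      = Matrix.diagonal (fun i => hM.eigenvalues i + c) := by
    ext i j
    by_cases hij : i = j <;> simp [Matrix.diagonal_apply, Matrix.one_apply, hij]
  have key : M + c • 1 = U * Matrix.diagonal (fun i => hM.eigenvalues i + c) * star U := by
    conv_lhs => rw [hM.spectral_theorem]
    rw [← hdiag, Matrix.mul_add, Matrix.add_mul]
    congr 1
    rw [Matrix.mul_smul, Matrix.smul_mul, Matrix.mul_one, hU]
  rw [key]
  have hd : (Matrix.diagonal (fun i => hM.eigenvalues i + c)).PosSemidef :=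
    Matrix.PosSemidef.diagonal (by intro i; simp only [Pi.zero_apply]; linarith [h i])
  have := hd.mul_mul_conjTranspose_same U
  rwa [Matrix.star_eq_conjTranspose] at key ⊢
  
lemma tendsto_matrix_apply {α : Type*} {F : Filter α} {f : α → Matrix k l ℝ} {M : Matrix k l ℝ}
    (h : Tendsto f F (nhds M)) (i : k) (j : l) :
    Tendsto (fun x => f x i j) F (nhds (M i j)) :=
  tendsto_pi_nhds.mp (tendsto_pi_nhds.mp h i) j

lemma tendsto_matrix_of_apply {α : Type*} {F : Filter α} {f : α → Matrix k l ℝ}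
    {M : Matrix k l ℝ} (h : ∀ i j, Tendsto (fun x => f x i j) F (nhds (M i j))) :
    Tendsto f F (nhds M) :=
  tendsto_pi_nhds.mpr fun i => tendsto_pi_nhds.mpr (h i)

lemma tendsto_fip {α : Type*} {F : Filter α} {f g : α → Matrix k l ℝ} {A B : Matrix k l ℝ}
    (hf : Tendsto f F (nhds A)) (hg : Tendsto g F (nhds B)) :
    Tendsto (fun x => fip (f x) (g x)) F (nhds (fip A B)) := by
  simp only [fip_eq_sum]
  exact tendsto_finset_sum _ fun j _ => tendsto_finset_sum _ fun i _ =>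
    (tendsto_matrix_apply hf i j).mul (tendsto_matrix_apply hg i j)

lemma fip_sum_left {ι : Type*} (s : Finset ι) (f : ι → Matrix k l ℝ) (B : Matrix k l ℝ) :
    fip (∑ i ∈ s, f i) B = ∑ i ∈ s, fip (f i) B := by
  classical
  induction s using Finset.induction_on with
  | empty => simp [fip_eq_sum]
  | insert a s h ih => rw [Finset.sum_insert h, Finset.sum_insert h, fip_add_left, ih]

lemma fip_expand_sub_smul (P R : Matrix k l ℝ) (c : ℝ) :
    fip (P - c • R) (P - c • R)
      = fip P P - 2 * c * fip R P + c ^ 2 * fip R R := by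
  rw [fip_sub_left, fip_sub_right, fip_sub_right, fip_smul_left, fip_smul_left, fip_smul_right,
    fip_smul_right, fip_comm P R]
  ring

lemma fip_right_sub_smul (P R : Matrix k l ℝ) (c : ℝ) :
    fip R (P - c • R) = fip R P - c * fip R R := by
  rw [fip_sub_right, fip_smul_right]

lemma adjA_apply {n m : ℕ} (A : Fin m → Matrix (Fin n) (Fin n) ℝ) (w : Fin m → ℝ)
    (a b : Fin n) : adjA A w a b = ∑ i, w i * A i a b := by
  simp [adjA, Matrix.sum_apply]

lemma fip_adjA_left {n m : ℕ} (A : Fin m → Matrix (Fin n) (Fin n) ℝ) (w : Fin m → ℝ)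
    (T : Matrix (Fin n) (Fin n) ℝ) (hT : opA A T = 0) : fip (adjA A w) T = 0 := by
  rw [adjA, fip_sum_left]
  refine Finset.sum_eq_zero fun t _ => ?_
  rw [fip_smul_left]
  have : fip (A t) T = 0 := congrFun hT t
  rw [this, mul_zero]


/-- Theorem 5.3 of the paper, global convergence of ManiDSDP:
under the ManiDSDP iteration with the stopping criterion
`‖X^{k+1}Y^{k+1}‖ ≤ ε_k`, `λ_min(X^{k+1}) ≥ −τ_k` for summable nonnegative
`(ε_k), (τ_k)`, and assuming a KKT point of (DSDP') exists, every limit point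
`(Ŝ, ŷ, X̂, ẑ)` of `(S^k, y^k, X^k, z^k)` is a KKT point of (DSDP). -/
theorem stmt18 {n m : ℕ} (hn : 0 < n) (hm : 0 < m)
    (A : Fin m → Matrix (Fin n) (Fin n) ℝ) (hA : ∀ i, (A i).IsSymm)
    (hinv : Function.Bijective (fun y : Fin m → ℝ => opA A (adjA A y)))
    (b : Fin m → ℝ) (C : Matrix (Fin n) (Fin n) ℝ) (hC : C.IsSymm)
    (D : Matrix (Fin n) (Fin n) ℝ) (hD : D = adjA A (AAinv A b))
    -- the iterates
    (p : ℕ → ℕ) (hp : ∀ k, 0 < p k)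
    (Y : (k : ℕ) → Matrix (Fin n) (Fin (p k)) ℝ)
    (hYrows : ∀ k, ∀ i, ∑ j, (Y k i j) ^ 2 = 1)
    (S : ℕ → Matrix (Fin n) (Fin n) ℝ) (hS : ∀ k, S k = Y k * (Y k)ᵀ)
    (y : ℕ → Fin m → ℝ) (hy : ∀ k, y k = AAinv A (opA A (S k + C)))
    (R : ℕ → Matrix (Fin n) (Fin n) ℝ) (hR : ∀ k, R k = adjA A (y k) - S k - C)
    (σmin σmax : ℝ) (h0 : 0 < σmin) (h1 : σmin ≤ σmax)
    (σ : ℕ → ℝ) (hσ : ∀ k, σ k ∈ Set.Icc σmin σmax)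
    (Xt : ℕ → Matrix (Fin n) (Fin n) ℝ)
    (hupd : ∀ k, 1 ≤ k → Xt (k + 1) = Xt k - σ k • R (k + 1))
    (hAXt : ∀ k, 1 ≤ k → opA A (Xt k) = 0)
    (z : ℕ → Fin n → ℝ) (hz : ∀ k, z k = Matrix.diag ((Xt k + D) * S k))
    (X : ℕ → Matrix (Fin n) (Fin n) ℝ)
    (hX : ∀ k, X k = Xt k + D - Matrix.diagonal (z k))
    -- the stopping criterion with summable tolerances
    (ε τ : ℕ → ℝ) (hε : ∀ k, 0 ≤ ε k) (hτ : ∀ k, 0 ≤ τ k)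
    (hεsum : Summable ε) (hτsum : Summable τ)
    (hstop1 : ∀ k, frobNorm (X (k + 1) * Y (k + 1)) ≤ ε k)
    (hXherm : ∀ k, (X k).IsHermitian)
    (hstop2 : ∀ k, ∀ i, -(τ k) ≤ (hXherm (k + 1)).eigenvalues i)
    -- existence of a KKT point of (DSDP')
    (Sstar Xstar : Matrix (Fin n) (Fin n) ℝ) (ystar : Fin m → ℝ) (zstar : Fin n → ℝ)
    (hSstar : Sstar = adjA A ystar - C)
    (hSstardiag : ∀ i, Sstar i i = 1)
    (hSstarpsd : Sstar.PosSemidef) (hXstarpsd : Xstar.PosSemidef)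
    (hcomp : fip Xstar Sstar = 0)
    (hstatKKT : opA A (Xstar + Matrix.diagonal zstar) = b)
    -- a limit point of the iterates along a subsequence
    (φ : ℕ → ℕ) (hφ : StrictMono φ) (hφ1 : ∀ k, 1 ≤ φ k)
    (Shat Xhat : Matrix (Fin n) (Fin n) ℝ) (yhat : Fin m → ℝ) (zhat : Fin n → ℝ)
    (hlimS : Tendsto (fun k => S (φ k)) atTop (nhds Shat))
    (hlimy : Tendsto (fun k => y (φ k)) atTop (nhds yhat))
    (hlimX : Tendsto (fun k => X (φ k)) atTop (nhds Xhat))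
    (hlimz : Tendsto (fun k => z (φ k)) atTop (nhds zhat)) :
    Shat = adjA A yhat - C
    ∧ (∀ i, Shat i i = 1)
    ∧ Shat.PosSemidef
    ∧ Xhat.PosSemidef
    ∧ fip Xhat Shat = 0
    ∧ opA A (Xhat + Matrix.diagonal zhat) = b := by
  classical
  have hfsurj : Function.Surjective (fun w : Fin m → ℝ => opA A (adjA A w)) := hinv.surjective
  have hopA_D : opA A D = b := by
    rw [hD]; exact Function.invFun_eq (hfsurj b)
  have opA_add : ∀ M N : Matrix (Fin n) (Fin n) ℝ, opA A (M + N) = opA A M + opA A N := by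
    intro M N; funext i; simp [opA, fip_add_right]
  have opA_sub : ∀ M N : Matrix (Fin n) (Fin n) ℝ, opA A (M - N) = opA A M - opA A N := by
    intro M N; funext i; simp [opA, fip_sub_right]
  -- 𝒜 R = 0
  have hAR : ∀ k, opA A (R k) = 0 := by
    intro k
    have h1 : opA A (adjA A (y k)) = opA A (S k + C) := by
      rw [hy k]; exact Function.invFun_eq (hfsurj _)
    rw [hR k, sub_sub, opA_sub, h1, sub_self]
  -- diagonal of S k is 1
  have hSdiag : ∀ k i, S k i i = 1 := by
    intro k i
    rw [hS k]
    simpa [Matrix.mul_apply, sq] using hYrows k i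
  have hSpsd : ∀ k, (S k).PosSemidef := by
    intro k
    rw [hS k]
    have := Matrix.posSemidef_self_mul_conjTranspose (Y k)
    rwa [Matrix.conjTranspose_eq_transpose_of_trivial] at this
  -- feasibility of X k + Diag z k
  have hXdiag : ∀ k, X k + Matrix.diagonal (z k) = Xt k + D := by
    intro k; rw [hX k]; abel
  have hfeas : ∀ k, 1 ≤ k → opA A (X k + Matrix.diagonal (z k)) = b := by
    intro k hk
    rw [hXdiag k, opA_add, hAXt k hk, hopA_D, zero_add]
  -- the comparison KKT point
  set Xts : Matrix (Fin n) (Fin n) ℝ := Xstar - D + Matrix.diagonal zstar with hXts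
  have hAXts : opA A Xts = 0 := by
    have h2 : Xts = (Xstar + Matrix.diagonal zstar) - D := by rw [hXts]; abel
    rw [h2, opA_sub, hstatKKT, hopA_D, sub_self]
  have hAT : ∀ k, 1 ≤ k → opA A (Xt k - Xts) = 0 := by
    intro k hk
    rw [opA_sub, hAXt k hk, hAXts, sub_self]
  -- Cauchy-Schwarz bound on complementarity
  have hfipb : ∀ k, |fip (S (k + 1)) (X (k + 1))| ≤ Real.sqrt n * ε k := by
    intro k
    have hc : fip (X (k + 1)) (S (k + 1)) = fip (X (k + 1) * Y (k + 1)) (Y (k + 1)) := by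
      rw [hS (k + 1)]; exact fip_mul_right _ _
    have hYY : fip (Y (k + 1)) (Y (k + 1)) = (n : ℝ) := by
      rw [fip_eq_sum, Finset.sum_comm]
      have h3 : ∀ i, ∑ j, Y (k + 1) i j * Y (k + 1) i j = 1 := fun i => by
        simpa [sq] using hYrows (k + 1) i
      simp [h3]
    have hXY2 : fip (X (k + 1) * Y (k + 1)) (X (k + 1) * Y (k + 1)) ≤ ε k ^ 2 := by
      have h1 := hstop1 k
      rw [frobNorm] at h1
      nlinarith [Real.sq_sqrt (fip_self_nonneg (X (k + 1) * Y (k + 1))),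
        Real.sqrt_nonneg (fip (X (k + 1) * Y (k + 1)) (X (k + 1) * Y (k + 1))), hε k]
    have hcs := fip_cauchy (X (k + 1) * Y (k + 1)) (Y (k + 1))
    have hsq : (fip (X (k + 1) * Y (k + 1)) (Y (k + 1))) ^ 2 ≤ (Real.sqrt n * ε k) ^ 2 := by
      have hn0 : (0 : ℝ) ≤ (n : ℝ) := Nat.cast_nonneg n
      have h5 : (Real.sqrt n * ε k) ^ 2 = (n : ℝ) * ε k ^ 2 := by
        rw [mul_pow, Real.sq_sqrt hn0]
      rw [h5]
      calc (fip (X (k + 1) * Y (k + 1)) (Y (k + 1))) ^ 2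
          ≤ fip (X (k + 1) * Y (k + 1)) (X (k + 1) * Y (k + 1)) * fip (Y (k + 1)) (Y (k + 1)) := hcs
        _ ≤ (n : ℝ) * ε k ^ 2 := by
            rw [hYY]
            nlinarith [fip_self_nonneg (X (k + 1) * Y (k + 1)), hn0]
    have h9 : 0 ≤ Real.sqrt n * ε k := mul_nonneg (Real.sqrt_nonneg _) (hε k)
    rw [fip_comm, hc]
    rw [abs_le]
    constructor <;> nlinarith [hsq, h9]
  -- the key lower bound on ⟨R^{k+1}, X̃^{k+1} − X̃*⟩
  have key1 : ∀ k, -(Real.sqrt n * ε k + n * τ k) ≤ fip (R (k + 1)) (Xt (k + 1) - Xts) := by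
    intro k
    have hk1 : 1 ≤ k + 1 := Nat.le_add_left 1 k
    have hAT0 : opA A (Xt (k + 1) - Xts) = 0 := hAT (k + 1) hk1
    have e1 : fip (R (k + 1)) (Xt (k + 1) - Xts) = -fip (S (k + 1) + C) (Xt (k + 1) - Xts) := by
      rw [hR (k + 1), sub_sub, fip_sub_left, fip_adjA_left A _ _ hAT0, zero_sub]
    have e2 : fip (Sstar + C) (Xt (k + 1) - Xts) = 0 := by
      have h2 : Sstar + C = adjA A ystar := by rw [hSstar]; abel
      rw [h2]; exact fip_adjA_left A _ _ hAT0
    have e3 : fip (S (k + 1) - Sstar) (Xt (k + 1) - Xts) = fip (S (k + 1) + C) (Xt (k + 1) - Xts) := by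
      have ha := fip_add_left (S (k + 1)) C (Xt (k + 1) - Xts)
      have hb := fip_add_left Sstar C (Xt (k + 1) - Xts)
      have hc2 := fip_sub_left (S (k + 1)) Sstar (Xt (k + 1) - Xts)
      linarith [e2]
    have hTdec : Xt (k + 1) - Xts
        = (X (k + 1) - Xstar) + Matrix.diagonal (fun i => z (k + 1) i - zstar i) := by
      have hdd : Matrix.diagonal (fun i => z (k + 1) i - zstar i)
          = Matrix.diagonal (z (k + 1)) - Matrix.diagonal zstar := by
        ext i j
        by_cases hij : i = j <;> simp [Matrix.diagonal_apply, hij]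
      have hXk : Xt (k + 1) = X (k + 1) - D + Matrix.diagonal (z (k + 1)) := by
        rw [hX (k + 1)]; abel
      rw [hXk, hdd, hXts]; abel
    have e4 : fip (S (k + 1) - Sstar) (Matrix.diagonal (fun i => z (k + 1) i - zstar i)) = 0 := by
      rw [fip_diagonal_right]
      refine Finset.sum_eq_zero fun i _ => ?_
      simp [Matrix.sub_apply, hSdiag (k + 1) i, hSstardiag i]
    have e6 : fip (S (k + 1) - Sstar) (Xt (k + 1) - Xts)
        = fip (S (k + 1) - Sstar) (X (k + 1) - Xstar) := by
      rw [hTdec, fip_add_right, e4, add_zero]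
    have expand : fip (S (k + 1) - Sstar) (X (k + 1) - Xstar)
        = fip (S (k + 1)) (X (k + 1)) - fip (S (k + 1)) Xstar
          - fip Sstar (X (k + 1)) + fip Sstar Xstar := by
      rw [fip_sub_left, fip_sub_right, fip_sub_right]; ring
    have b1 : fip (S (k + 1)) (X (k + 1)) ≤ Real.sqrt n * ε k :=
      le_trans (le_abs_self _) (hfipb k)
    have b2 : 0 ≤ fip (S (k + 1)) Xstar := fip_nonneg (hSpsd (k + 1)) hXstarpsd
    have b3 : -((n : ℝ) * τ k) ≤ fip Sstar (X (k + 1)) := by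
      have hshift : (X (k + 1) + τ k • 1).PosSemidef :=
        posSemidef_add_smul_one (hXherm (k + 1)) (τ k) (hstop2 k)
      have h0' : 0 ≤ fip Sstar (X (k + 1) + τ k • 1) := fip_nonneg hSstarpsd hshift
      rw [fip_add_right, fip_smul_right, fip_one_right] at h0'
      have hd1 : ∑ i, Sstar i i = (n : ℝ) := by simp [hSstardiag]
      rw [hd1] at h0'
      linarith
    have b4 : fip Sstar Xstar = 0 := by rw [fip_comm]; exact hcomp
    have efinal : fip (R (k + 1)) (Xt (k + 1) - Xts)
        = -fip (S (k + 1) - Sstar) (X (k + 1) - Xstar) := by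
      rw [e1, ← e3, e6]
    rw [efinal, expand]
    linarith
  -- the Fejér-monotonicity step
  have hstep : ∀ k, 1 ≤ k →
      fip (Xt (k + 1) - Xts) (Xt (k + 1) - Xts) + σmin ^ 2 * fip (R (k + 1)) (R (k + 1))
        ≤ fip (Xt k - Xts) (Xt k - Xts) + 2 * σmax * (Real.sqrt n * ε k + (n : ℝ) * τ k) := by
    intro k hk
    have hσk := hσ k
    have hσ1 : σmin ≤ σ k := hσk.1
    have hσ2 : σ k ≤ σmax := hσk.2
    have hPQ : Xt (k + 1) - Xts = (Xt k - Xts) - σ k • R (k + 1) := by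
      rw [hupd k hk]; abel
    have hexp : fip (Xt (k + 1) - Xts) (Xt (k + 1) - Xts)
        = fip (Xt k - Xts) (Xt k - Xts) - 2 * σ k * fip (R (k + 1)) (Xt k - Xts)
          + (σ k) ^ 2 * fip (R (k + 1)) (R (k + 1)) := by
      rw [hPQ, fip_expand_sub_smul]
    have hRQ : fip (R (k + 1)) (Xt (k + 1) - Xts)
        = fip (R (k + 1)) (Xt k - Xts) - σ k * fip (R (k + 1)) (R (k + 1)) := by
      rw [hPQ, fip_right_sub_smul]
    have hkey := key1 k
    have hRR := fip_self_nonneg (R (k + 1))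
    have he : 0 ≤ Real.sqrt n * ε k + (n : ℝ) * τ k := by
      have h6 := mul_nonneg (Real.sqrt_nonneg (n : ℝ)) (hε k)
      have h7 := mul_nonneg (Nat.cast_nonneg (α := ℝ) n) (hτ k)
      linarith
    have hσ0 : 0 ≤ σ k := le_trans h0.le hσ1
    have hRP : fip (R (k + 1)) (Xt k - Xts)
        = fip (R (k + 1)) (Xt (k + 1) - Xts) + σ k * fip (R (k + 1)) (R (k + 1)) := by
      linarith [hRQ]
    rw [hRP] at hexp
    have u1 : σmin ^ 2 * fip (R (k + 1)) (R (k + 1)) ≤ (σ k) ^ 2 * fip (R (k + 1)) (R (k + 1)) :=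
      mul_le_mul_of_nonneg_right (by nlinarith [hσ1, h0]) hRR
    have u2 : σ k * -(Real.sqrt n * ε k + (n : ℝ) * τ k) ≤ σ k * fip (R (k + 1)) (Xt (k + 1) - Xts) :=
      mul_le_mul_of_nonneg_left hkey hσ0
    have u3 : σ k * (Real.sqrt n * ε k + (n : ℝ) * τ k) ≤ σmax * (Real.sqrt n * ε k + (n : ℝ) * τ k) :=
      mul_le_mul_of_nonneg_right hσ2 he
    nlinarith [hexp, u1, u2, u3]
  -- summability of residuals
  have hdnn : ∀ j : ℕ, 0 ≤ 2 * σmax * (Real.sqrt n * ε (j + 1) + (n : ℝ) * τ (j + 1)) := by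
    intro j
    have h6 := mul_nonneg (Real.sqrt_nonneg (n : ℝ)) (hε (j + 1))
    have h7 := mul_nonneg (Nat.cast_nonneg (α := ℝ) n) (hτ (j + 1))
    have h8 : (0 : ℝ) ≤ 2 * σmax := by linarith
    exact mul_nonneg h8 (by linarith)
  have hdsum : Summable (fun j : ℕ => 2 * σmax * (Real.sqrt n * ε (j + 1) + (n : ℝ) * τ (j + 1))) := by
    have h1 : Summable (fun j : ℕ => ε (j + 1)) := (summable_nat_add_iff 1).mpr hεsum
    have h2 : Summable (fun j : ℕ => τ (j + 1)) := (summable_nat_add_iff 1).mpr hτsum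
    have h3 := (h1.mul_left (2 * σmax * Real.sqrt n)).add (h2.mul_left (2 * σmax * (n : ℝ)))
    exact h3.congr fun j => by ring
  have hind : ∀ N : ℕ,
      fip (Xt (N + 1) - Xts) (Xt (N + 1) - Xts)
        + σmin ^ 2 * ∑ j ∈ Finset.range N, fip (R (j + 1 + 1)) (R (j + 1 + 1))
      ≤ fip (Xt 1 - Xts) (Xt 1 - Xts)
        + ∑ j ∈ Finset.range N, 2 * σmax * (Real.sqrt n * ε (j + 1) + (n : ℝ) * τ (j + 1)) := by
    intro N
    induction N with
    | zero => simp
    | succ N ih =>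
      have hs := hstep (N + 1) (Nat.le_add_left 1 N)
      rw [Finset.sum_range_succ, Finset.sum_range_succ]
      linarith [ih, hs]
  have hbound : ∀ N : ℕ, ∑ j ∈ Finset.range N, fip (R (j + 1 + 1)) (R (j + 1 + 1))
      ≤ (fip (Xt 1 - Xts) (Xt 1 - Xts)
          + ∑' j : ℕ, 2 * σmax * (Real.sqrt n * ε (j + 1) + (n : ℝ) * τ (j + 1))) / σmin ^ 2 := by
    intro N
    have h5 := hind N
    have h6 := fip_self_nonneg (Xt (N + 1) - Xts)
    have h7 : ∑ j ∈ Finset.range N, 2 * σmax * (Real.sqrt n * ε (j + 1) + (n : ℝ) * τ (j + 1))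
        ≤ ∑' j : ℕ, 2 * σmax * (Real.sqrt n * ε (j + 1) + (n : ℝ) * τ (j + 1)) :=
      sum_le_hasSum (Finset.range N) (fun j _ => hdnn j) hdsum.hasSum
    have hσp : 0 < σmin ^ 2 := by positivity
    rw [le_div_iff₀ hσp]
    nlinarith [h5, h6, h7]
  have hrrsum : Summable (fun j : ℕ => fip (R (j + 1 + 1)) (R (j + 1 + 1))) :=
    summable_of_sum_range_le (fun j => fip_self_nonneg _) hbound
  have hg0 : Tendsto (fun j : ℕ => fip (R j) (R j)) atTop (nhds 0) := by
    have h1 : Tendsto (fun j : ℕ => fip (R (j + 2)) (R (j + 2))) atTop (nhds 0) :=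
      hrrsum.tendsto_atTop_zero
    exact (tendsto_add_atTop_iff_nat (f := fun j : ℕ => fip (R j) (R j)) 2).mp h1
  have hgφ : Tendsto (fun i : ℕ => fip (R (φ i)) (R (φ i))) atTop (nhds 0) :=
    hg0.comp hφ.tendsto_atTop
  -- limits of the iterates
  have hadjlim : Tendsto (fun i => adjA A (y (φ i))) atTop (nhds (adjA A yhat)) := by
    refine tendsto_matrix_of_apply fun a c => ?_
    simp only [adjA_apply]
    exact tendsto_finset_sum _ fun t _ => (tendsto_pi_nhds.mp hlimy t).mul tendsto_const_nhds
  have hRlim : Tendsto (fun i => R (φ i)) atTop (nhds (adjA A yhat - Shat - C)) := by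
    refine Tendsto.congr (fun i => (hR (φ i)).symm) ?_
    exact (hadjlim.sub hlimS).sub tendsto_const_nhds
  have hRhat0 : adjA A yhat - Shat - C = 0 := by
    have h1 : Tendsto (fun i => fip (R (φ i)) (R (φ i))) atTop
        (nhds (fip (adjA A yhat - Shat - C) (adjA A yhat - Shat - C))) :=
      tendsto_fip hRlim hRlim
    exact fip_self_eq_zero (tendsto_nhds_unique h1 hgφ)
  -- goal 1
  have goal1 : Shat = adjA A yhat - C := by
    rw [sub_sub, sub_eq_zero] at hRhat0
    rw [hRhat0]; abel
  -- goal 2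
  have goal2 : ∀ i, Shat i i = 1 := by
    intro i
    have h1 : Tendsto (fun k => S (φ k) i i) atTop (nhds (Shat i i)) :=
      tendsto_matrix_apply hlimS i i
    have h2 : Tendsto (fun k => S (φ k) i i) atTop (nhds 1) :=
      Tendsto.congr (fun k => (hSdiag (φ k) i).symm) tendsto_const_nhds
    exact tendsto_nhds_unique h1 h2
  -- goal 3
  have goal3 : Shat.PosSemidef := by
    rw [Matrix.posSemidef_iff_dotProduct_mulVec]
    constructor
    · ext i j
      rw [Matrix.conjTranspose_apply]
      have h1 : Tendsto (fun k => S (φ k) j i) atTop (nhds (Shat j i)) :=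
        tendsto_matrix_apply hlimS j i
      have h2 : Tendsto (fun k => S (φ k) j i) atTop (nhds (Shat i j)) := by
        refine Tendsto.congr (fun k => ?_) (tendsto_matrix_apply hlimS i j)
        have h3 := congrFun (congrFun (hSpsd (φ k)).1 j) i
        rw [Matrix.conjTranspose_apply] at h3
        have h4 : S (φ k) i j = S (φ k) j i := by simpa using h3
        exact h4
      simpa using tendsto_nhds_unique h1 h2
    · intro x
      have h1 : Tendsto (fun k => fip (Matrix.vecMulVec x x) (S (φ k))) atTop
          (nhds (fip (Matrix.vecMulVec x x) Shat)) := tendsto_fip tendsto_const_nhds hlimS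
      have h2 : ∀ k, 0 ≤ fip (Matrix.vecMulVec x x) (S (φ k)) := fun k => by
        rw [← quadform_eq_fip]; exact (hSpsd (φ k)).dotProduct_mulVec_nonneg x
      have h3 : 0 ≤ fip (Matrix.vecMulVec x x) Shat := ge_of_tendsto' h1 h2
      rwa [← quadform_eq_fip] at h3
  -- preliminary limits for goal 4
  have hτ0 : Tendsto (fun k => τ (φ k - 1)) atTop (nhds 0) := by
    have h1 : Tendsto τ atTop (nhds 0) := hτsum.tendsto_atTop_zero
    have h2 : Tendsto (fun k => φ k - 1) atTop atTop :=
      tendsto_atTop_mono (fun k => Nat.sub_le_sub_right (hφ.id_le k) 1) (tendsto_sub_atTop_nat 1)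
    exact h1.comp h2
  have hXpsdshift : ∀ k, (X (φ k) + τ (φ k - 1) • 1).PosSemidef := by
    intro k
    have hidx : φ k - 1 + 1 = φ k := Nat.sub_add_cancel (hφ1 k)
    have h2 := hstop2 (φ k - 1)
    rw [hidx] at h2
    exact posSemidef_add_smul_one (hXherm (φ k)) (τ (φ k - 1)) h2
  have goal4 : Xhat.PosSemidef := by
    rw [Matrix.posSemidef_iff_dotProduct_mulVec]
    constructor
    · ext i j
      rw [Matrix.conjTranspose_apply]
      have h1 : Tendsto (fun k => X (φ k) j i) atTop (nhds (Xhat j i)) :=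
        tendsto_matrix_apply hlimX j i
      have h2 : Tendsto (fun k => X (φ k) j i) atTop (nhds (Xhat i j)) := by
        refine Tendsto.congr (fun k => ?_) (tendsto_matrix_apply hlimX i j)
        have h3 := congrFun (congrFun (hXherm (φ k)).eq j) i
        rw [Matrix.conjTranspose_apply] at h3
        have h4 : X (φ k) i j = X (φ k) j i := by simpa using h3
        exact h4
      simpa using tendsto_nhds_unique h1 h2
    · intro x
      set c : ℝ := fip (Matrix.vecMulVec x x) 1 with hcdef
      have hc0 : 0 ≤ c := by
        rw [hcdef, fip_one_right]
        exact Finset.sum_nonneg fun i _ => by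
          simp [Matrix.vecMulVec_apply, mul_self_nonneg]
      have h1 : Tendsto (fun k => fip (Matrix.vecMulVec x x) (X (φ k))) atTop
          (nhds (fip (Matrix.vecMulVec x x) Xhat)) := tendsto_fip tendsto_const_nhds hlimX
      have h2 : ∀ k, -(τ (φ k - 1)) * c ≤ fip (Matrix.vecMulVec x x) (X (φ k)) := by
        intro k
        have h3 : 0 ≤ fip (Matrix.vecMulVec x x) (X (φ k) + τ (φ k - 1) • 1) := by
          rw [← quadform_eq_fip]; exact (hXpsdshift k).dotProduct_mulVec_nonneg x
        rw [fip_add_right, fip_smul_right, ← hcdef] at h3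
        linarith
      have h4 : Tendsto (fun k => -(τ (φ k - 1)) * c) atTop (nhds 0) := by
        have := (hτ0.neg).mul_const c
        simpa using this
      have h5 : 0 ≤ fip (Matrix.vecMulVec x x) Xhat :=
        le_of_tendsto_of_tendsto' h4 h1 h2
      rwa [← quadform_eq_fip] at h5
  -- goal 5
  have goal5 : fip Xhat Shat = 0 := by
    have h1 : Tendsto (fun k => fip (X (φ k)) (S (φ k))) atTop (nhds (fip Xhat Shat)) :=
      tendsto_fip hlimX hlimS
    have h2 : Tendsto (fun k => fip (X (φ k)) (S (φ k))) atTop (nhds 0) := by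
      have hb : ∀ k, |fip (X (φ k)) (S (φ k))| ≤ Real.sqrt n * ε (φ k - 1) := by
        intro k
        have hidx : φ k - 1 + 1 = φ k := Nat.sub_add_cancel (hφ1 k)
        have h3 := hfipb (φ k - 1)
        rw [hidx] at h3
        rwa [fip_comm] at h3
      have hε0 : Tendsto (fun k => Real.sqrt n * ε (φ k - 1)) atTop (nhds 0) := by
        have h1' : Tendsto ε atTop (nhds 0) := hεsum.tendsto_atTop_zero
        have h2' : Tendsto (fun k => φ k - 1) atTop atTop :=
          tendsto_atTop_mono (fun k => Nat.sub_le_sub_right (hφ.id_le k) 1)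
            (tendsto_sub_atTop_nat 1)
        have := (h1'.comp h2').const_mul (Real.sqrt n)
        simpa using this
      exact squeeze_zero_norm (fun k => by simpa [Real.norm_eq_abs] using hb k) hε0
    exact tendsto_nhds_unique h1 h2
  -- goal 6
  have goal6 : opA A (Xhat + Matrix.diagonal zhat) = b := by
    have hdlim : Tendsto (fun k => Matrix.diagonal (z (φ k))) atTop
        (nhds (Matrix.diagonal zhat)) := by
      refine tendsto_matrix_of_apply fun a c => ?_
      rcases eq_or_ne a c with h | h
      · subst h
        simp only [Matrix.diagonal_apply_eq]
        exact tendsto_pi_nhds.mp hlimz a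
      · simp only [Matrix.diagonal_apply_ne _ h]
        exact tendsto_const_nhds
    have hsumlim : Tendsto (fun k => X (φ k) + Matrix.diagonal (z (φ k))) atTop
        (nhds (Xhat + Matrix.diagonal zhat)) := hlimX.add hdlim
    funext i
    have h1 : Tendsto (fun k => opA A (X (φ k) + Matrix.diagonal (z (φ k))) i) atTop
        (nhds (opA A (Xhat + Matrix.diagonal zhat) i)) :=
      tendsto_fip tendsto_const_nhds hsumlim
    have h2 : Tendsto (fun k => opA A (X (φ k) + Matrix.diagonal (z (φ k))) i) atTop
        (nhds (b i)) := by
      refine Tendsto.congr (fun k => ?_) tendsto_const_nhds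
      exact (congrFun (hfeas (φ k) (hφ1 k)) i).symm
    exact tendsto_nhds_unique h1 h2
  exact ⟨goal1, goal2, goal3, goal4, goal5, goal6⟩
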